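/- arXiv:2304.00005 — 5 statements merged into one kernel-verified Lean document; each statement's English description precedes it below -/
import Mathlib

section
/- In a lattice L, if A and B are blocks of a compatible tolerance T, then the sets {a ∨ b : a ∈ A, b ∈ B} and {a ∧ b : a ∈ A, b ∈ B} are pre-blocks of T. -/
def IsPreblock {S : Type*} (T : S → S → Prop) (K : Set S) : Prop :=
  ∀ a ∈ K, ∀ b ∈ K, T a b

def IsBlock {S : Type*} (T : S → S → Prop) (B : Set S) : Prop :=
  IsPreblock T B ∧ ∀ K : Set S, IsPreblock T K → B ⊆ K → K = B

/-- A tolerance on a lattice is compatible if it is preserved by `⊔` and `⊓`. -/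
def Compatible {L : Type*} [Lattice L] (T : L → L → Prop) : Prop :=
  ∀ a₁ b₁ a₂ b₂ : L, T a₁ b₁ → T a₂ b₂ →
    T (a₁ ⊔ a₂) (b₁ ⊔ b₂) ∧ T (a₁ ⊓ a₂) (b₁ ⊓ b₂)

open scoped SetFamily

namespace IsPreblock

variable {L : Type*} [Lattice L] {T : L → L → Prop} {A B : Set L}

theorem sups (hc : Compatible T) (hA : IsPreblock T A) (hB : IsPreblock T B) :
    IsPreblock T (A ⊻ B) := by
  rintro _ ⟨a₁, ha₁, b₁, hb₁, rfl⟩ _ ⟨a₂, ha₂, b₂, hb₂, rfl⟩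
  exact (hc a₁ a₂ b₁ b₂ (hA a₁ ha₁ a₂ ha₂) (hB b₁ hb₁ b₂ hb₂)).1

theorem infs (hc : Compatible T) (hA : IsPreblock T A) (hB : IsPreblock T B) :
    IsPreblock T (A ⊼ B) := by
  rintro _ ⟨a₁, ha₁, b₁, hb₁, rfl⟩ _ ⟨a₂, ha₂, b₂, hb₂, rfl⟩
  exact (hc a₁ a₂ b₁ b₂ (hA a₁ ha₁ a₂ ha₂) (hB b₁ hb₁ b₂ hb₂)).2

end IsPreblock

theorem sup_inf_of_blocks_are_preblocks_general {L : Type*} [Lattice L]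
    (T : L → L → Prop)
    (hc : Compatible T) (A B : Set L) (hA : IsBlock T A) (hB : IsBlock T B) :
    IsPreblock T {x : L | ∃ a ∈ A, ∃ b ∈ B, x = a ⊔ b} ∧
    IsPreblock T {x : L | ∃ a ∈ A, ∃ b ∈ B, x = a ⊓ b} := by
  have hsups : {x : L | ∃ a ∈ A, ∃ b ∈ B, x = a ⊔ b} = A ⊻ B := by
    ext; simp only [Set.mem_ofPred_eq, Set.mem_sups, eq_comm]
  have hinfs : {x : L | ∃ a ∈ A, ∃ b ∈ B, x = a ⊓ b} = A ⊼ B := by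
    ext; simp only [Set.mem_ofPred_eq, Set.mem_infs, eq_comm]
  rw [hsups, hinfs]
  exact ⟨hA.1.sups hc hB.1, hA.1.infs hc hB.1⟩

theorem sup_inf_of_blocks_are_preblocks {L : Type*} [Lattice L]
    (T : L → L → Prop) (hr : Reflexive T) (hs : Symmetric T)
    (hc : Compatible T) (A B : Set L) (hA : IsBlock T A) (hB : IsBlock T B) :
    IsPreblock T {x : L | ∃ a ∈ A, ∃ b ∈ B, x = a ⊔ b} ∧
    IsPreblock T {x : L | ∃ a ∈ A, ∃ b ∈ B, x = a ⊓ b} :=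
  sup_inf_of_blocks_are_preblocks_general T hc A B hA hB
end

section
/- Every block of a compatible tolerance on a lattice is a convex sublattice: if x, b lie in a block Z and x ≤ a ≤ b, then a ∈ Z; moreover Z is closed under ∨ and ∧. -/
theorem IsBlock.mem_of_forall_rel {S : Type*} {T : S → S → Prop} {Z : Set S} (hZ : IsBlock T Z)
    {a : S} (haa : T a a) (hleft : ∀ z ∈ Z, T a z) (hright : ∀ z ∈ Z, T z a) : a ∈ Z := by
  have hK : IsPreblock T (insert a Z) := by
    rintro x (rfl | hx) y (rfl | hy)
    · exact haa
    · exact hleft y hy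
    · exact hright x hx
    · exact hZ.1 x hx y hy
  rw [← hZ.2 _ hK (Set.subset_insert a Z)]
  exact Set.mem_insert a Z

namespace Compatible

variable {L : Type*} [Lattice L] {T : L → L → Prop}

theorem flip (hc : Compatible T) : Compatible (flip T) :=
  fun a₁ b₁ a₂ b₂ h₁ h₂ => hc b₁ a₁ b₂ a₂ h₁ h₂

theorem sup_rel {x y z : L} (hc : Compatible T) (hx : T x z) (hy : T y z) : T (x ⊔ y) z := by
  simpa only [sup_idem] using (hc x z y z hx hy).1

theorem inf_rel {x y z : L} (hc : Compatible T) (hx : T x z) (hy : T y z) : T (x ⊓ y) z := by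
  simpa only [inf_idem] using (hc x z y z hx hy).2

theorem rel_of_le_of_le {x a b z : L} (hc : Compatible T) (haa : T a a)
    (hxa : x ≤ a) (hab : a ≤ b) (hx : T x z) (hb : T b z) : T a z := by
  have ha : T a (z ⊔ a) := by
    simpa only [sup_eq_right.mpr hxa] using (hc x z a a hx haa).1
  simpa only [inf_eq_right.mpr hab, inf_sup_self] using (hc b z a (z ⊔ a) hb ha).2

end Compatible

theorem block_is_convex_sublattice_general {L : Type*} [Lattice L]
    (T : L → L → Prop) (hr : Reflexive T)
    (hc : Compatible T) (Z : Set L) (hZ : IsBlock T Z) :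
    (∀ x a b : L, x ∈ Z → b ∈ Z → x ≤ a → a ≤ b → a ∈ Z) ∧
    (∀ x y : L, x ∈ Z → y ∈ Z → x ⊔ y ∈ Z ∧ x ⊓ y ∈ Z) := by
  have rel := hZ.1
  refine ⟨fun x a b hx hb hxa hab => ?_, fun x y hx hy => ⟨?_, ?_⟩⟩
  · exact hZ.mem_of_forall_rel (hr a)
      (fun z hz => hc.rel_of_le_of_le (hr a) hxa hab (rel x hx z hz) (rel b hb z hz))
      (fun z hz =>
        hc.flip.rel_of_le_of_le (T := flip T) (hr a) hxa hab (rel z hz x hx) (rel z hz b hb))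
  · exact hZ.mem_of_forall_rel (hr _)
      (fun z hz => hc.sup_rel (rel x hx z hz) (rel y hy z hz))
      (fun z hz => hc.flip.sup_rel (T := flip T) (rel z hz x hx) (rel z hz y hy))
  · exact hZ.mem_of_forall_rel (hr _)
      (fun z hz => hc.inf_rel (rel x hx z hz) (rel y hy z hz))
      (fun z hz => hc.flip.inf_rel (T := flip T) (rel z hz x hx) (rel z hz y hy))

/-- Every block of a compatible tolerance on a lattice is a convex sublattice. -/
theorem block_is_convex_sublattice {L : Type*} [Lattice L]
    (T : L → L → Prop) (hr : Reflexive T) (hs : Symmetric T)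
    (hc : Compatible T) (Z : Set L) (hZ : IsBlock T Z) :
    (∀ x a b : L, x ∈ Z → b ∈ Z → x ≤ a → a ≤ b → a ∈ Z) ∧
    (∀ x y : L, x ∈ Z → y ∈ Z → x ⊔ y ∈ Z ∧ x ⊓ y ∈ Z) :=
  block_is_convex_sublattice_general T hr hc Z hZ
end

section
/- Blocks of a compatible tolerance on a finite lattice L are intervals: for each block B there exist a ≤ b in L with B = [a,b], where a = ⋀B and b = ⋁B. -/
theorem SupClosed.exists_isGreatest_of_finite {α : Type*} [SemilatticeSup α] {s : Set α}
    (hs : SupClosed s) (hfin : s.Finite) (hne : s.Nonempty) : ∃ b, IsGreatest s b := by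
  obtain ⟨m, hm⟩ := hfin.exists_maximal hne
  exact ⟨m, hm.prop, fun x hx ↦ le_sup_right.trans (hm.eq_of_ge (hs hm.prop hx) le_sup_left).le⟩

theorem InfClosed.exists_isLeast_of_finite {α : Type*} [SemilatticeInf α] {s : Set α}
    (hs : InfClosed s) (hfin : s.Finite) (hne : s.Nonempty) : ∃ a, IsLeast s a := by
  obtain ⟨m, hm⟩ := hfin.exists_minimal hne
  exact ⟨m, hm.prop, fun x hx ↦ (hm.eq_of_le (hs hm.prop hx) inf_le_left).ge.trans inf_le_right⟩

theorem Compatible.rel_of_mem_Icc {L : Type*} [Lattice L] {T : L → L → Prop}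
    (hr : Reflexive T) (hs : Symmetric T) (hc : Compatible T) {u v x y : L} (huv : T u v)
    (hx : x ∈ Set.Icc u v) (hy : y ∈ Set.Icc u v) : T x y := by
  have hxv : T x v := by
    simpa [sup_eq_right.2 hx.1, sup_eq_left.2 hx.2] using (hc u v x x huv (hr x)).1
  have hyv : T y v := by
    simpa [sup_eq_right.2 hy.1, sup_eq_left.2 hy.2] using (hc u v y y huv (hr y)).1
  have hx_inf : T x (x ⊓ y) := by
    simpa [inf_eq_right.2 hx.2, inf_comm] using (hc v y x x (hs hyv) (hr x)).2
  have hinf_y : T (x ⊓ y) y := by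
    simpa [inf_eq_right.2 hy.2] using (hc x v y y hxv (hr y)).2
  simpa using (hc x (x ⊓ y) (x ⊓ y) y hx_inf hinf_y).1

namespace IsBlock

theorem nonempty {S : Type*} [Nonempty S] {T : S → S → Prop} {B : Set S} (hr : Reflexive T)
    (hB : IsBlock T B) : B.Nonempty := by
  obtain ⟨z⟩ := ‹Nonempty S›
  have hz : IsPreblock T {z} := by
    rintro u rfl v rfl
    exact hr _
  refine Set.nonempty_iff_ne_empty.2 fun hempty ↦ ?_
  have hzB : {z} = B := hB.2 {z} hz (hempty ▸ Set.empty_subset _)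
  exact Set.singleton_ne_empty z (hzB.trans hempty)

theorem mem_of_forall_rel_s13 {S : Type*} {T : S → S → Prop} {B : Set S} (hr : Reflexive T)
    (hs : Symmetric T) (hB : IsBlock T B) {x : S} (hx : ∀ y ∈ B, T x y) : x ∈ B := by
  have hins : IsPreblock T (insert x B) := by
    rintro u (rfl | hu) v (rfl | hv)
    · exact hr _
    · exact hx v hv
    · exact hs (hx u hu)
    · exact hB.1 u hu v hv
  rw [← hB.2 _ hins (Set.subset_insert x B)]
  exact Set.mem_insert x B

variable {L : Type*} [Lattice L] {T : L → L → Prop} {B : Set L}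

theorem supClosed (hr : Reflexive T) (hs : Symmetric T) (hc : Compatible T)
    (hB : IsBlock T B) : SupClosed B := fun x hx y hy ↦
  hB.mem_of_forall_rel_s13 hr hs fun z hz ↦ by
    simpa using (hc x z y z (hB.1 x hx z hz) (hB.1 y hy z hz)).1

theorem infClosed (hr : Reflexive T) (hs : Symmetric T) (hc : Compatible T)
    (hB : IsBlock T B) : InfClosed B := fun x hx y hy ↦
  hB.mem_of_forall_rel_s13 hr hs fun z hz ↦ by
    simpa using (hc x z y z (hB.1 x hx z hz) (hB.1 y hy z hz)).2

theorem eq_Icc (hr : Reflexive T) (hs : Symmetric T) (hc : Compatible T) (hB : IsBlock T B)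
    {a b : L} (ha : IsLeast B a) (hb : IsGreatest B b) : B = Set.Icc a b := by
  have hIcc : IsPreblock T (Set.Icc a b) := fun x hx y hy ↦
    Compatible.rel_of_mem_Icc hr hs hc (hB.1 a ha.1 b hb.1) hx hy
  exact (hB.2 _ hIcc fun y hy ↦ ⟨ha.2 hy, hb.2 hy⟩).symm

end IsBlock

/-- Blocks of a compatible tolerance on a finite lattice are intervals
`B = [a, b]` with `a = ⋀ B` (the greatest lower bound of `B`) and
`b = ⋁ B` (the least upper bound of `B`). -/
theorem block_is_interval {L : Type*} [Lattice L] [Fintype L] [Nonempty L]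
    (T : L → L → Prop) (hr : Reflexive T) (hs : Symmetric T)
    (hc : Compatible T) (B : Set L) (hB : IsBlock T B) :
    ∃ a b : L, a ≤ b ∧ B = Set.Icc a b ∧ IsGLB B a ∧ IsLUB B b := by
  have hne : B.Nonempty := hB.nonempty hr
  obtain ⟨a, ha⟩ := (hB.infClosed hr hs hc).exists_isLeast_of_finite B.toFinite hne
  obtain ⟨b, hb⟩ := (hB.supClosed hr hs hc).exists_isGreatest_of_finite B.toFinite hne
  exact ⟨a, b, hb.2 ha.1, hB.eq_Icc hr hs hc ha hb, ha.isGLB, hb.isLUB⟩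
end

section
/- If the blocks of a compatible tolerance on a finite lattice L are {[aᵢ,bᵢ] : i ∈ I}, then for all i, j ∈ I there exists k ∈ I with a_k = aᵢ ∨ aⱼ and bᵢ ∨ bⱼ ≤ b_k. -/
/-! Let `B` be a block containing `[a₁ ⊔ a₂, b₁ ⊔ b₂]`, which is a preblock by compatibility.
In a finite lattice `B` is an interval `[p, q]`, since the meet and the join of a preblock are
related and intervals with related endpoints are preblocks. Every `x ∈ B` is related to
`b₁ ⊔ b₂`; meeting with `b₁` and then with `a₁` makes `[x ⊓ a₁, b₁]` a preblock containing
the block `[a₁, b₁]`, so `a₁ ≤ x`. Likewise `a₂ ≤ x`, hence `p = a₁ ⊔ a₂`. -/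

section Blocks

variable {S : Type*} {T : S → S → Prop}

theorem isBlock_iff_maximal {B : Set S} : IsBlock T B ↔ Maximal (IsPreblock T) B :=
  ⟨fun hB => ⟨hB.1, fun K hK hBK => (hB.2 K hK hBK).le⟩,
    fun hB => ⟨hB.1, fun _ hK hBK => (hB.2 hK hBK).antisymm hBK⟩⟩

theorem IsPreblock.exists_isBlock_superset [Finite S] {K : Set S} (hK : IsPreblock T K) :
    ∃ B, IsBlock T B ∧ K ⊆ B := by
  obtain ⟨B, hKB, hB⟩ := Finite.exists_le_maximal hK
  exact ⟨B, isBlock_iff_maximal.2 hB, hKB⟩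

end Blocks

section Lattice

variable {L : Type*} [Lattice L] {T : L → L → Prop}

theorem isPreblock_Icc_of_rel (hr : Reflexive T) (hs : Symmetric T) (hc : Compatible T)
    {a b : L} (hab : T a b) : IsPreblock T (Set.Icc a b) := by
  have rel_top : ∀ u ∈ Set.Icc a b, T u b := by
    intro u hu
    simpa only [sup_eq_right.2 hu.1, sup_eq_left.2 hu.2] using (hc a b u u hab (hr u)).1
  intro u hu v hv
  simpa only [inf_eq_left.2 hu.2, inf_eq_right.2 hv.2] using
    (hc u b b v (rel_top u hu) (hs (rel_top v hv))).2

theorem IsPreblock.rel_inf'_sup' (hc : Compatible T) {s : Finset L}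
    (hs : IsPreblock T (s : Set L)) (hne : s.Nonempty) : T (s.inf' hne id) (s.sup' hne id) := by
  have inf'_rel : ∀ y ∈ s, T (s.inf' hne id) y := fun y hy =>
    Finset.inf'_induction hne id (p := fun z => T z y)
      (fun z₁ h₁ z₂ h₂ => by simpa only [inf_idem] using (hc z₁ y z₂ y h₁ h₂).2)
      (fun x hx => hs x hx y hy)
  exact Finset.sup'_induction hne id (p := fun w => T (s.inf' hne id) w)
    (fun w₁ h₁ w₂ h₂ => by simpa only [sup_idem] using (hc _ w₁ _ w₂ h₁ h₂).1)
    inf'_rel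

theorem IsBlock.exists_eq_Icc [Finite L] (hr : Reflexive T) (hs : Symmetric T)
    (hc : Compatible T) {B : Set L} (hB : IsBlock T B) (hne : B.Nonempty) :
    ∃ p q, p ≤ q ∧ B = Set.Icc p q := by
  have hfin := B.toFinite
  have hne' : hfin.toFinset.Nonempty := hfin.toFinset_nonempty.2 hne
  set p := hfin.toFinset.inf' hne' id
  set q := hfin.toFinset.sup' hne' id
  have hpre : IsPreblock T (hfin.toFinset : Set L) := by
    simpa only [Set.Finite.coe_toFinset] using hB.1
  have hsub : B ⊆ Set.Icc p q := fun x hx =>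
    ⟨Finset.inf'_le id (hfin.mem_toFinset.2 hx), Finset.le_sup' id (hfin.mem_toFinset.2 hx)⟩
  obtain ⟨x, hx⟩ := hne
  refine ⟨p, q, (hsub hx).1.trans (hsub hx).2, ?_⟩
  exact (hB.2 _ (isPreblock_Icc_of_rel hr hs hc (hpre.rel_inf'_sup' hc hne')) hsub).symm

theorem IsBlock.le_of_rel (hr : Reflexive T) (hs : Symmetric T) (hc : Compatible T)
    {p q x c : L} (hB : IsBlock T (Set.Icc p q)) (hpq : p ≤ q) (hxc : T x c) (hqc : q ≤ c) :
    p ≤ x := by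
  have hTpq : T p q := hB.1 p ⟨le_rfl, hpq⟩ q ⟨hpq, le_rfl⟩
  have hxq : T (x ⊓ q) q := by
    simpa only [inf_eq_right.2 hqc] using (hc x c q q hxc (hr q)).2
  have hxp : T (x ⊓ p) q := by
    simpa only [inf_idem, inf_assoc, inf_eq_right.2 hpq] using (hc _ q p q hxq hTpq).2
  have hIcc : Set.Icc (x ⊓ p) q = Set.Icc p q :=
    hB.2 _ (isPreblock_Icc_of_rel hr hs hc hxp) (Set.Icc_subset_Icc inf_le_right le_rfl)
  have hmem : x ⊓ p ∈ Set.Icc p q := hIcc ▸ ⟨le_rfl, inf_le_right.trans hpq⟩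
  exact hmem.1.trans inf_le_left

end Lattice

/-- If `[a₁,b₁]` and `[a₂,b₂]` are blocks of a compatible tolerance on a finite
lattice, then there is a block `[a₃,b₃]` with `a₃ = a₁ ⊔ a₂` and `b₁ ⊔ b₂ ≤ b₃`. -/
theorem blocks_sup_condition {L : Type*} [Lattice L] [Fintype L]
    (T : L → L → Prop) (hr : Reflexive T) (hs : Symmetric T)
    (hc : Compatible T) (a₁ b₁ a₂ b₂ : L) (h₁ : a₁ ≤ b₁) (h₂ : a₂ ≤ b₂)
    (hB₁ : IsBlock T (Set.Icc a₁ b₁)) (hB₂ : IsBlock T (Set.Icc a₂ b₂)) :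
    ∃ a₃ b₃ : L, a₃ = a₁ ⊔ a₂ ∧ b₁ ⊔ b₂ ≤ b₃ ∧
      IsBlock T (Set.Icc a₃ b₃) := by
  have hT₁ : T a₁ b₁ := hB₁.1 a₁ ⟨le_rfl, h₁⟩ b₁ ⟨h₁, le_rfl⟩
  have hT₂ : T a₂ b₂ := hB₂.1 a₂ ⟨le_rfl, h₂⟩ b₂ ⟨h₂, le_rfl⟩
  have hac : a₁ ⊔ a₂ ≤ b₁ ⊔ b₂ := sup_le_sup h₁ h₂
  obtain ⟨B, hB, hsub⟩ :=
    (isPreblock_Icc_of_rel hr hs hc (hc a₁ b₁ a₂ b₂ hT₁ hT₂).1).exists_isBlock_superset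
  have ha : a₁ ⊔ a₂ ∈ B := hsub ⟨le_rfl, hac⟩
  have hc' : b₁ ⊔ b₂ ∈ B := hsub ⟨hac, le_rfl⟩
  obtain ⟨p, q, hpq, rfl⟩ := hB.exists_eq_Icc hr hs hc ⟨_, ha⟩
  have hp : p = a₁ ⊔ a₂ := by
    have hpc : T p (b₁ ⊔ b₂) := hB.1 p ⟨le_rfl, hpq⟩ _ hc'
    exact ha.1.antisymm (sup_le (hB₁.le_of_rel hr hs hc h₁ hpc le_sup_left)
      (hB₂.le_of_rel hr hs hc h₂ hpc le_sup_right))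
  exact ⟨p, q, hp, hc'.2, hB⟩
end

section
/- For blocks C and E of a compatible tolerance on a finite lattice, the lattice ideal generated by C equals the ideal generated by E if and only if the lattice filter generated by C equals the filter generated by E. -/
section Preblock

variable {S : Type*} {T : S → S → Prop} {C E : Set S}

lemma IsPreblock.union (hC : IsPreblock T C) (hE : IsPreblock T E)
    (hCE : ∀ a ∈ C, ∀ b ∈ E, T a b ∧ T b a) : IsPreblock T (C ∪ E) := by
  rintro a (ha | ha) b (hb | hb)
  · exact hC a ha b hb
  · exact (hCE a ha b hb).1
  · exact (hCE b hb a ha).2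
  · exact hE a ha b hb

lemma IsBlock.eq_of_isPreblock_union (hC : IsBlock T C) (hE : IsBlock T E)
    (h : IsPreblock T (C ∪ E)) : C = E :=
  (hC.2 _ h Set.subset_union_left).symm.trans (hE.2 _ h Set.subset_union_right)

end Preblock

section Lattice

variable {L : Type*} [Lattice L] {T : L → L → Prop} {C E : Set L} {a b m : L}

lemma Compatible.rel_of_le_of_le_s16 (hc : Compatible T) (ham : T a m) (hmb : T m b)
    (ha : a ≤ m) (hb : b ≤ m) : T a b := by
  simpa only [inf_eq_left.mpr ha, inf_eq_right.mpr hb] using (hc a m m b ham hmb).2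

lemma Compatible.rel_of_ge_of_ge (hc : Compatible T) (ham : T a m) (hmb : T m b)
    (ha : m ≤ a) (hb : m ≤ b) : T a b := by
  simpa only [sup_eq_left.mpr ha, sup_eq_right.mpr hb] using (hc a m m b ham hmb).1

lemma IsBlock.eq_of_isGreatest (hc : Compatible T) (hC : IsBlock T C) (hE : IsBlock T E)
    (hmC : IsGreatest C m) (hmE : IsGreatest E m) : C = E :=
  hC.eq_of_isPreblock_union hE <| hC.1.union hE.1 fun a ha b hb =>
    ⟨hc.rel_of_le_of_le_s16 (hC.1 a ha m hmC.1) (hE.1 m hmE.1 b hb) (hmC.2 ha) (hmE.2 hb),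
      hc.rel_of_le_of_le_s16 (hE.1 b hb m hmE.1) (hC.1 m hmC.1 a ha) (hmE.2 hb) (hmC.2 ha)⟩

lemma IsBlock.eq_of_isLeast (hc : Compatible T) (hC : IsBlock T C) (hE : IsBlock T E)
    (hmC : IsLeast C m) (hmE : IsLeast E m) : C = E :=
  hC.eq_of_isPreblock_union hE <| hC.1.union hE.1 fun a ha b hb =>
    ⟨hc.rel_of_ge_of_ge (hC.1 a ha m hmC.1) (hE.1 m hmE.1 b hb) (hmC.2 ha) (hmE.2 hb),
      hc.rel_of_ge_of_ge (hE.1 b hb m hmE.1) (hC.1 m hmC.1 a ha) (hmE.2 hb) (hmC.2 ha)⟩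

end Lattice

theorem block_ideal_iff_filter_general {L : Type*} [Lattice L]
    (T : L → L → Prop)
    (hc : Compatible T) (C E : Set L) (hC : IsBlock T C) (hE : IsBlock T E)
    (cMin cMax eMin eMax : L)
    (hc₁ : IsLeast C cMin) (hc₂ : IsGreatest C cMax)
    (he₁ : IsLeast E eMin) (he₂ : IsGreatest E eMax) :
    Set.Iic cMax = Set.Iic eMax ↔ Set.Ici cMin = Set.Ici eMin := by
  rw [Set.Iic_inj, Set.Ici_inj]
  constructor
  · rintro rfl
    exact hc₁.unique (hC.eq_of_isGreatest hc hE hc₂ he₂ ▸ he₁)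
  · rintro rfl
    exact hc₂.unique (hC.eq_of_isLeast hc hE hc₁ he₁ ▸ he₂)

/-- For blocks `C` and `E` of a compatible tolerance on a finite lattice (which
are intervals, whence the lattice ideal generated by a block is `↓(max)` and
the filter generated is `↑(min)`): the ideal generated by `C` equals the one
generated by `E` iff the filter generated by `C` equals the one generated by `E`. -/
theorem block_ideal_iff_filter {L : Type*} [Lattice L] [Fintype L]
    (T : L → L → Prop) (hr : Reflexive T) (hs : Symmetric T)
    (hc : Compatible T) (C E : Set L) (hC : IsBlock T C) (hE : IsBlock T E)
    (cMin cMax eMin eMax : L)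
    (hc₁ : IsLeast C cMin) (hc₂ : IsGreatest C cMax)
    (he₁ : IsLeast E eMin) (he₂ : IsGreatest E eMax) :
    Set.Iic cMax = Set.Iic eMax ↔ Set.Ici cMin = Set.Ici eMin :=
  block_ideal_iff_filter_general T hc C E hC hE cMin cMax eMin eMax hc₁ hc₂ he₁ he₂
end
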